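/- arXiv:1702.00901 — 4 statements merged into one kernel-verified Lean document; each statement's English description precedes it below -/
import Mathlib

section
/- The series of arctangents of the b_k converges to π/4: π/4 = ∑_{k=1}^∞ arctan(b_k). -/
/-! By induction `a k = 2 cos (π / 2 ^ (k + 1))`, so the half-angle formulas give
`b k = tan (π / 2 ^ (k + 2))`. Hence `arctan (b (k + 1)) = π / 2 ^ (k + 3)`, a geometric series
with sum `π / 4`. -/

open Real

namespace Real

theorem tan_pi_div_two_pow_succ_succ (n : ℕ) :
    tan (π / 2 ^ (n + 2)) = √(2 - sqrtTwoAddSeries 0 n) / sqrtTwoAddSeries 0 (n + 1) := by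
  rw [tan_eq_sin_div_cos, sin_pi_over_two_pow_succ, cos_pi_over_two_pow (n + 1)]
  have hpos : 0 < sqrtTwoAddSeries 0 (n + 1) := sqrt_pos.2 (by
    linarith [sqrtTwoAddSeries_zero_nonneg n])
  field_simp

theorem arctan_tan_pi_div_two_pow_succ_succ (n : ℕ) :
    arctan (tan (π / 2 ^ (n + 2))) = π / 2 ^ (n + 2) := by
  apply arctan_tan
  · linarith [pi_pos, show 0 < π / 2 ^ (n + 2) by positivity]
  · exact div_lt_div_of_pos_left pi_pos two_pos (lt_self_pow₀ one_lt_two (by omega))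

end Real

theorem eq_sqrtTwoAddSeries_zero_of_succ_eq_sqrt {a : ℕ → ℝ} (ha1 : a 1 = √2)
    (ha : ∀ k ≥ 1, a (k + 1) = √(2 + a k)) : ∀ k ≥ 1, a k = sqrtTwoAddSeries 0 k := by
  intro k hk
  induction k, hk using Nat.le_induction with
  | base => rw [ha1, sqrtTwoAddSeries_one]
  | succ k hk ih => rw [ha k hk, ih, sqrtTwoAddSeries]

theorem sum_arctan_b_eq_pi_div_four (a : ℕ → ℝ)
    (ha1 : a 1 = Real.sqrt 2)
    (ha : ∀ k ≥ 1, a (k + 1) = Real.sqrt (2 + a k))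
    (b : ℕ → ℝ)
    (hb : ∀ k ≥ 1, b k = Real.sqrt (2 - a k) / a (k + 1)) :
    HasSum (fun k : ℕ => Real.arctan (b (k + 1))) (π / 4) := by
  have hA := eq_sqrtTwoAddSeries_zero_of_succ_eq_sqrt ha1 ha
  have hterm (k : ℕ) : arctan (b (k + 1)) = π / 4 / 2 / 2 ^ k := by
    rw [hb (k + 1) k.succ_pos, hA (k + 1) k.succ_pos, hA (k + 1 + 1) (by omega),
      ← tan_pi_div_two_pow_succ_succ, arctan_tan_pi_div_two_pow_succ_succ]
    field_simp
    ring
  simpa only [hterm] using hasSum_geometric_two' (π / 4)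
end

section
/- The ratio of consecutive terms of the sequence b tends to one half: lim_{k→∞} b_{k+1}/b_k = 1/2. -/
/-!
Writing `s n = sqrtTwoAddSeries 0 n`, the half-angle formulas give `s n = 2 cos (π / 2 ^ (n + 1))`
and `√(2 - s n) = 2 sin (π / 2 ^ (n + 2))`, so `b k = tan (π / 2 ^ (k + 2))`. Consecutive terms
are `tan x` and `tan (2 x)` with `x = π / 2 ^ (k + 3) → 0⁺`, and by the double-angle formula
`tan x / tan (2 x) = (1 - tan x ^ 2) / 2 → 1 / 2`.
-/

open Real Filter Topology

namespace Real

theorem eq_sqrtTwoAddSeries_of_recursion {a : ℕ → ℝ} (ha1 : a 1 = √2)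
    (ha : ∀ k ≥ 1, a (k + 1) = √(2 + a k)) : ∀ k ≥ 1, a k = sqrtTwoAddSeries 0 k := by
  intro k hk
  induction k, hk using Nat.le_induction with
  | base => simp [ha1]
  | succ k hk ih => rw [ha k hk, ih, sqrtTwoAddSeries]

theorem sqrt_two_sub_sqrtTwoAddSeries_div_succ (n : ℕ) :
    √(2 - sqrtTwoAddSeries 0 n) / sqrtTwoAddSeries 0 (n + 1) = tan (π / 2 ^ (n + 2)) := by
  rw [tan_eq_sin_div_cos, sin_pi_over_two_pow_succ, cos_pi_over_two_pow]
  ring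

theorem tan_div_tan_two_mul {x : ℝ} (hx : tan x ≠ 0) :
    tan x / tan (2 * x) = (1 - tan x ^ 2) / 2 := by
  rw [tan_two_mul, div_div_eq_mul_div]
  field_simp

theorem tendsto_tan_div_tan_two_mul :
    Tendsto (fun x => tan x / tan (2 * x)) (𝓝[>] 0) (𝓝 (1 / 2)) := by
  have htan : Tendsto tan (𝓝[>] 0) (𝓝 0) := by
    simpa using ((continuousAt_tan (x := 0)).2 (by simp)).tendsto.mono_left nhdsWithin_le_nhds
  have hlim : Tendsto (fun x => (1 - tan x ^ 2) / 2) (𝓝[>] 0) (𝓝 (1 / 2)) := by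
    simpa using ((htan.pow 2).const_sub 1).div_const 2
  refine hlim.congr' ?_
  filter_upwards [Ioo_mem_nhdsGT (by positivity : (0 : ℝ) < π / 2)] with x hx
  exact (tan_div_tan_two_mul (tan_pos_of_pos_of_lt_pi_div_two hx.1 hx.2).ne').symm

theorem tendsto_pi_div_two_pow_nhdsGT_zero :
    Tendsto (fun n : ℕ => π / 2 ^ n) atTop (𝓝[>] 0) := by
  refine tendsto_nhdsWithin_iff.2 ⟨?_, Eventually.of_forall fun n => Set.mem_Ioi.2 (by positivity)⟩
  simpa [div_eq_mul_inv, ← inv_pow] using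
    (tendsto_pow_atTop_nhds_zero_of_lt_one (by norm_num : (0 : ℝ) ≤ 2⁻¹) (by norm_num)).const_mul π

end Real

theorem b_ratio_tendsto_half (a : ℕ → ℝ)
    (ha1 : a 1 = Real.sqrt 2)
    (ha : ∀ k ≥ 1, a (k + 1) = Real.sqrt (2 + a k))
    (b : ℕ → ℝ)
    (hb : ∀ k ≥ 1, b k = Real.sqrt (2 - a k) / a (k + 1)) :
    Tendsto (fun k : ℕ => b (k + 1) / b k) atTop (𝓝 (1 / 2)) := by
  have hb_tan : ∀ k ≥ 1, b k = tan (π / 2 ^ (k + 2)) := fun k hk => by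
    rw [hb k hk, eq_sqrtTwoAddSeries_of_recursion ha1 ha k hk,
      eq_sqrtTwoAddSeries_of_recursion ha1 ha (k + 1) (by omega),
      sqrt_two_sub_sqrtTwoAddSeries_div_succ]
  have hlim := tendsto_tan_div_tan_two_mul.comp
    (tendsto_pi_div_two_pow_nhdsGT_zero.comp (tendsto_add_atTop_nat 3))
  refine hlim.congr' ?_
  filter_upwards [eventually_ge_atTop 1] with k hk
  have hdouble : 2 * (π / 2 ^ (k + 3)) = π / 2 ^ (k + 2) := by
    rw [pow_succ]
    field_simp
  simp only [Function.comp_apply, hb_tan k hk, hb_tan (k + 1) (by omega), hdouble]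
end

section
/- The sequence c_k converges to 1 as k → ∞. -/
open Real Filter Topology

lemma tan_add_formula (x y : ℝ) (hx : Real.cos x ≠ 0) (hy : Real.cos y ≠ 0)
    (hxy : Real.cos (x + y) ≠ 0) :
    (Real.tan x + Real.tan y) / (1 - Real.tan x * Real.tan y) = Real.tan (x + y) := by
  have h1 : 1 - Real.tan x * Real.tan y = Real.cos (x + y) / (Real.cos x * Real.cos y) := by
    rw [Real.tan_eq_sin_div_cos, Real.tan_eq_sin_div_cos, Real.cos_add]
    field_simp
  rw [h1, Real.tan_eq_sin_div_cos, Real.tan_eq_sin_div_cos, Real.tan_eq_sin_div_cos,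
    Real.sin_add]
  field_simp

theorem c_tendsto_one (a : ℕ → ℝ)
    (ha1 : a 1 = Real.sqrt 2)
    (ha : ∀ k ≥ 1, a (k + 1) = Real.sqrt (2 + a k))
    (b : ℕ → ℝ)
    (hb : ∀ k ≥ 1, b k = Real.sqrt (2 - a k) / a (k + 1))
    (c : ℕ → ℝ)
    (hc1 : c 1 = b 1)
    (hc : ∀ k ≥ 1, c (k + 1) = (c k + b (k + 1)) / (1 - c k * b (k + 1))) :
    Tendsto c atTop (𝓝 1) := by
  have pi_pos := Real.pi_pos
  -- basic bounds on the angles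
  have hang : ∀ n : ℕ, 2 ≤ n → 0 < π / 2 ^ n ∧ π / 2 ^ n ≤ π / 4 := by
    intro n hn
    constructor
    · positivity
    · apply div_le_div_of_nonneg_left pi_pos.le (by norm_num)
      calc (4:ℝ) = 2 ^ 2 := by norm_num
      _ ≤ 2 ^ n := by exact pow_le_pow_right₀ (by norm_num) hn
  -- a k = 2 cos (π / 2^(k+1))
  have hA : ∀ k ≥ 1, a k = 2 * Real.cos (π / 2 ^ (k + 1)) := by
    intro k hk
    induction k with
    | zero => omega
    | succ n ih =>
      rcases Nat.eq_or_lt_of_le hk with h1 | h1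
      · rw [← h1] at *
        rw [ha1]
        norm_num
        ring
      · have hn : 1 ≤ n := by omega
        have ihn := ih hn
        rw [ha n hn, ihn]
        have key : 2 + 2 * Real.cos (π / 2 ^ (n + 1)) = (2 * Real.cos (π / 2 ^ (n + 2))) ^ 2 := by
          have hd : π / 2 ^ (n + 1) = 2 * (π / 2 ^ (n + 2)) := by
            rw [pow_succ]; field_simp; ring
          rw [hd, Real.cos_two_mul]
          ring
        rw [key, Real.sqrt_sq]
        have h2 := hang (n + 2) (by omega)
        have : Real.cos (π / 2 ^ (n + 2)) ≥ 0 := by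
          apply Real.cos_nonneg_of_mem_Icc
          constructor <;> nlinarith [h2.1, h2.2]
        linarith
  -- b k = tan (π / 2^(k+2))
  have hB : ∀ k ≥ 1, b k = Real.tan (π / 2 ^ (k + 2)) := by
    intro k hk
    rw [hb k hk, hA k hk, hA (k+1) (by omega)]
    have key : 2 - 2 * Real.cos (π / 2 ^ (k + 1)) = (2 * Real.sin (π / 2 ^ (k + 2))) ^ 2 := by
      have hd : π / 2 ^ (k + 1) = 2 * (π / 2 ^ (k + 2)) := by
        rw [pow_succ]; field_simp; ring
      rw [hd, Real.cos_two_mul]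
      nlinarith [Real.sin_sq_add_cos_sq (π / 2 ^ (k + 2))]
    rw [key, Real.sqrt_sq]
    · rw [Real.tan_eq_sin_div_cos]
      have : (k + 1) + 1 = k + 2 := by ring
      rw [this]
      rw [mul_div_mul_left _ _ (by norm_num : (2:ℝ) ≠ 0)]
    · have h2 := hang (k + 2) (by omega)
      have : Real.sin (π / 2 ^ (k + 2)) ≥ 0 := by
        apply Real.sin_nonneg_of_nonneg_of_le_pi h2.1.le
        nlinarith [h2.2]
      linarith
  -- cos positivity helper
  have hcospos : ∀ x : ℝ, 0 ≤ x → x ≤ π / 4 → Real.cos x ≠ 0 := by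
    intro x h0 h1
    have : 0 < Real.cos x := by
      apply Real.cos_pos_of_mem_Ioo
      constructor <;> nlinarith
    linarith
  -- c k = tan (π/4 - π / 2^(k+2))
  have hC : ∀ k ≥ 1, c k = Real.tan (π / 4 - π / 2 ^ (k + 2)) := by
    intro k hk
    induction k with
    | zero => omega
    | succ n ih =>
      rcases Nat.eq_or_lt_of_le hk with h1 | h1
      · rw [← h1] at *
        rw [hc1, hB 1 le_rfl]
        congr 1
        norm_num
        ring
      · have hn : 1 ≤ n := by omega
        have ihn := ih hn
        rw [hc n hn, ihn, hB (n+1) (by omega)]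
        set A := π / 4 - π / 2 ^ (n + 2) with hAdef
        set B := π / 2 ^ ((n + 1) + 2) with hBdef
        have hAB : A + B = π / 4 - π / 2 ^ ((n+1) + 2) := by
          rw [hAdef, hBdef]
          have : π / 2 ^ (n + 2) = 2 * (π / 2 ^ (n + 3)) := by
            rw [pow_succ]; field_simp; ring
          rw [this]
          ring_nf
        have h2 := hang (n + 2) (by omega)
        have h3 := hang (n + 3) (by omega)
        have hc1' : Real.cos A ≠ 0 := by
          apply hcospos
          · rw [hAdef]; linarith [h2.2]
          · rw [hAdef]; linarith [h2.1]
        have hc2' : Real.cos B ≠ 0 := by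
          apply hcospos B h3.1.le h3.2
        have hc3' : Real.cos (A + B) ≠ 0 := by
          rw [hAB]
          exact hcospos _ (by nlinarith [h3.2]) (by nlinarith [h3.1])
        rw [tan_add_formula A B hc1' hc2' hc3', hAB]
  -- the limit
  have h1 : Tendsto (fun k : ℕ => ((1:ℝ)/2) ^ k) atTop (𝓝 0) :=
    tendsto_pow_atTop_nhds_zero_of_lt_one (by norm_num) (by norm_num)
  have h0 : Tendsto (fun k : ℕ => π / 2 ^ (k + 2)) atTop (𝓝 0) := by
    have h2 := h1.const_mul (π / 4)
    rw [mul_zero] at h2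
    refine h2.congr fun k => ?_
    rw [div_pow, one_pow, pow_add, div_mul_div_comm]
    norm_num
    ring
  have h3 : Tendsto (fun k : ℕ => π / 4 - π / 2 ^ (k + 2)) atTop (𝓝 (π / 4)) := by
    have := (tendsto_const_nhds (x := π/4) (f := atTop (α := ℕ))).sub h0
    simpa using this
  have h4 : ContinuousAt Real.tan (π / 4) := by
    apply Real.continuousAt_tan.mpr
    exact hcospos _ (by positivity) le_rfl
  have h5 : Tendsto (fun k : ℕ => Real.tan (π / 4 - π / 2 ^ (k + 2))) atTop (𝓝 1) := by
    have := h4.tendsto.comp h3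
    rwa [Real.tan_pi_div_four] at this
  exact h5.congr' ((eventually_ge_atTop 1).mono fun k hk => (hC k hk).symm)
end

section
/- For every positive integer m, lim_{k→∞} 2^{k+1}·(1 − c_k^m) = m·π. -/
open Real Filter Topology

/-!
Since `a k = 2 cos (π / 2 ^ (k + 1))`, the half-angle formulas give `b k = tan (π / 2 ^ (k + 2))`,
and the tangent addition formula turns the recursion for `c` into
`c k = tan (π / 4 - π / 2 ^ (k + 2))`. Hence `2 ^ (k + 1) (1 - c k ^ m)` is, up to the factor
`-2`, a difference quotient of `tan ^ m` at `π / 4` with step `-(π / 4) / 2 ^ k`, so it tends to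
`-2 · (-(π / 4)) · (tan ^ m)' (π / 4) = (π / 2) · 2m = m π`.
-/

theorem HasDerivAt.tendsto_two_pow_mul_sub {f : ℝ → ℝ} {f' x : ℝ} (hf : HasDerivAt f f' x)
    (h : ℝ) :
    Tendsto (fun n : ℕ => 2 ^ n * (f (x + h / 2 ^ n) - f x)) atTop (𝓝 (h * f')) := by
  rcases eq_or_ne h 0 with rfl | hh
  · simp
  have hstep : Tendsto (fun n : ℕ => h / 2 ^ n) atTop (𝓝[≠] 0) :=
    tendsto_nhdsWithin_of_tendsto_nhds_of_eventually_within _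
      (tendsto_const_nhds.div_atTop (tendsto_pow_atTop_atTop_of_one_lt one_lt_two))
      (Eventually.of_forall fun n => div_ne_zero hh (pow_ne_zero n two_ne_zero))
  refine ((hf.tendsto_slope_zero.comp hstep).const_mul h).congr fun n => ?_
  simp only [Function.comp_apply, smul_eq_mul]
  field_simp

/-- No hypothesis on `cos (x + y)` is needed: when it vanishes, both sides are junk `0`s. -/
theorem tan_add_of_cos_ne_zero {x y : ℝ} (hx : cos x ≠ 0) (hy : cos y ≠ 0) :
    tan (x + y) = (tan x + tan y) / (1 - tan x * tan y) :=
  tan_add' ⟨fun k hk => hx (cos_eq_zero_iff.mpr ⟨k, hk⟩),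
    fun l hl => hy (cos_eq_zero_iff.mpr ⟨l, hl⟩)⟩

theorem hasDerivAt_tan_pow_pi_div_four (m : ℕ) :
    HasDerivAt (fun x => tan x ^ m) (2 * m) (π / 4) := by
  have hcos : cos (π / 4) ^ 2 = 1 / 2 := by
    rw [cos_pi_div_four, div_pow, sq_sqrt zero_le_two]; norm_num
  have htan : HasDerivAt tan (1 / cos (π / 4) ^ 2) (π / 4) :=
    hasDerivAt_tan (by rw [cos_pi_div_four]; positivity)
  refine (htan.pow m).congr_deriv ?_
  rw [tan_pi_div_four, hcos]
  ring

theorem pi_div_two_pow_add_two_le (n : ℕ) : π / 2 ^ (n + 2) ≤ π / 4 :=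
  div_le_div_of_nonneg_left pi_pos.le (by norm_num) (by
    calc (4 : ℝ) = 2 ^ 2 := by norm_num
      _ ≤ 2 ^ (n + 2) := pow_le_pow_right₀ one_le_two (by omega))

theorem cos_pi_div_two_pow_add_two_pos (n : ℕ) : 0 < cos (π / 2 ^ (n + 2)) :=
  cos_pos_of_mem_Ioo ⟨by linarith [pi_pos, show 0 < π / 2 ^ (n + 2) by positivity],
    by linarith [pi_pos, pi_div_two_pow_add_two_le n]⟩

theorem cos_pi_div_four_sub_pi_div_two_pow_pos (n : ℕ) : 0 < cos (π / 4 - π / 2 ^ (n + 2)) :=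
  cos_pos_of_mem_Ioo ⟨by linarith [pi_pos, pi_div_two_pow_add_two_le n],
    by linarith [pi_pos, show 0 < π / 2 ^ (n + 2) by positivity]⟩

section NestedRadicals

variable {a b c : ℕ → ℝ}

theorem eq_sqrtTwoAddSeries_of_rec (ha1 : a 1 = √2) (ha : ∀ k ≥ 1, a (k + 1) = √(2 + a k)) :
    ∀ k ≥ 1, a k = sqrtTwoAddSeries 0 k := by
  intro k hk
  induction k, hk using Nat.le_induction with
  | base => rw [ha1, sqrtTwoAddSeries_one]
  | succ k hk ih => rw [ha k hk, ih, sqrtTwoAddSeries]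

theorem eq_tan_pi_div_two_pow_of_rec (ha : ∀ k ≥ 1, a k = sqrtTwoAddSeries 0 k)
    (hb : ∀ k ≥ 1, b k = √(2 - a k) / a (k + 1)) :
    ∀ k ≥ 1, b k = tan (π / 2 ^ (k + 2)) := by
  intro k hk
  rw [hb k hk, ha k hk, ha (k + 1) (by omega), tan_eq_sin_div_cos, sin_pi_over_two_pow_succ,
    show k + 2 = k + 1 + 1 by rfl, cos_pi_over_two_pow]
  field_simp

theorem eq_tan_pi_div_four_sub_of_rec (hb : ∀ k ≥ 1, b k = tan (π / 2 ^ (k + 2)))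
    (hc1 : c 1 = b 1) (hc : ∀ k ≥ 1, c (k + 1) = (c k + b (k + 1)) / (1 - c k * b (k + 1))) :
    ∀ k ≥ 1, c k = tan (π / 4 - π / 2 ^ (k + 2)) := by
  intro k hk
  induction k, hk using Nat.le_induction with
  | base => rw [hc1, hb 1 le_rfl]; congr 1; ring
  | succ k hk ih =>
    have hangle :
        π / 4 - π / 2 ^ (k + 1 + 2) = (π / 4 - π / 2 ^ (k + 2)) + π / 2 ^ (k + 1 + 2) := by
      ring
    rw [hc k hk, ih, hb (k + 1) (by omega), hangle,
      tan_add_of_cos_ne_zero (cos_pi_div_four_sub_pi_div_two_pow_pos k).ne'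
        (cos_pi_div_two_pow_add_two_pos (k + 1)).ne']

end NestedRadicals

theorem two_pow_mul_error_pow_tendsto_m_pi (a : ℕ → ℝ)
    (ha1 : a 1 = Real.sqrt 2)
    (ha : ∀ k ≥ 1, a (k + 1) = Real.sqrt (2 + a k))
    (b : ℕ → ℝ)
    (hb : ∀ k ≥ 1, b k = Real.sqrt (2 - a k) / a (k + 1))
    (c : ℕ → ℝ)
    (hc1 : c 1 = b 1)
    (hc : ∀ k ≥ 1, c (k + 1) = (c k + b (k + 1)) / (1 - c k * b (k + 1))) :
    ∀ m : ℕ, 1 ≤ m →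
      Tendsto (fun k : ℕ => 2 ^ (k + 1) * (1 - c k ^ m)) atTop (𝓝 (m * π)) := by
  intro m _
  have hc_tan : ∀ k ≥ 1, c k = tan (π / 4 - π / 2 ^ (k + 2)) :=
    eq_tan_pi_div_four_sub_of_rec
      (eq_tan_pi_div_two_pow_of_rec (eq_sqrtTwoAddSeries_of_rec ha1 ha) hb) hc1 hc
  have hlim :=
    ((hasDerivAt_tan_pow_pi_div_four m).tendsto_two_pow_mul_sub (-(π / 4))).const_mul (-2)
  rw [show -2 * (-(π / 4) * (2 * m)) = m * π by ring] at hlim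
  refine hlim.congr' ?_
  filter_upwards [eventually_ge_atTop 1] with k hk
  have hangle : π / 4 + -(π / 4) / 2 ^ k = π / 4 - π / 2 ^ (k + 2) := by ring
  rw [hc_tan k hk, ← hangle, tan_pi_div_four, one_pow]
  ring
end
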